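/- Let X₁,…,Xₙ be independent Bernoulli with parameters pᵢ, W = ∑ᵢ Xᵢ, λ = ∑ᵢ pᵢ. For any function f: ℤ_{≥0} → ℝ, E[λ Δf(W) − W Δf(W−1)] = ∑ᵢ pᵢ E[Xᵢ (Δ²f)(W − 1)], where Δf(j) = f(j+1) − f(j) and Δ²f = Δ(Δf). Consequently |E[λΔf(W) − WΔf(W−1)]| ≤ (∑ᵢ pᵢ²) ‖Δ²f‖_∞. -/

import Mathlib

/-!
Write `W = Xᵢ + Wᵢ`, where `Wᵢ` is the sum of the other summands and is independent of `Xᵢ`.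
Since `Xᵢ ∈ {0, 1}`, `Xᵢ g(W - 1) = Xᵢ g(Wᵢ)` and `g(W) - g(Wᵢ) = Xᵢ Δg(W - 1)`; independence
then gives `E[pᵢ g(W) - Xᵢ g(W - 1)] = pᵢ E[g(W) - g(Wᵢ)] = pᵢ E[Xᵢ Δg(W - 1)]`. Summing over `i`
with `g = Δf` is the identity, and `E[Xᵢ |Δ²f(W - 1)|] ≤ pᵢ ‖Δ²f‖_∞` gives the bound.
-/

open MeasureTheory ProbabilityTheory Finset
open scoped fwdDiff

namespace Nat

theorem cast_mul_apply_add_sub_one_of_le_one {b : ℕ} (hb : b ≤ 1) (v : ℕ) (g : ℕ → ℝ) :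
    (b : ℝ) * g (b + v - 1) = b * g v := by
  rcases Nat.le_one_iff_eq_zero_or_eq_one.mp hb with rfl | rfl <;> simp [add_comm]

theorem apply_add_sub_apply_of_le_one {b : ℕ} (hb : b ≤ 1) (v : ℕ) (g : ℕ → ℝ) :
    g (b + v) - g v = b * Δ_[1] g (b + v - 1) := by
  rcases Nat.le_one_iff_eq_zero_or_eq_one.mp hb with rfl | rfl <;> simp [fwdDiff, add_comm]

end Nat

section

variable {Ω : Type*} [MeasurableSpace Ω] {μ : Measure Ω}

theorem integrable_comp_of_le [IsFiniteMeasure μ] {Y : Ω → ℕ} (hY : Measurable Y) {N : ℕ}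
    (hYN : ∀ ω, Y ω ≤ N) (g : ℕ → ℝ) : Integrable (fun ω => g (Y ω)) μ :=
  .of_bound (measurable_from_top.comp hY).aestronglyMeasurable (∑ j ∈ range (N + 1), |g j|)
    (.of_forall fun ω => single_le_sum (f := fun j => |g j|) (fun _ _ => abs_nonneg _)
      (mem_range.mpr (Nat.lt_succ_of_le (hYN ω))))

theorem integrable_natCast_mul_comp_of_le [IsFiniteMeasure μ] {B Y : Ω → ℕ} (hB : Measurable B)
    (hB1 : ∀ ω, B ω ≤ 1) (hY : Measurable Y) {N : ℕ} (hYN : ∀ ω, Y ω ≤ N) (g : ℕ → ℝ) :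
    Integrable (fun ω => (B ω : ℝ) * g (Y ω)) μ :=
  (integrable_comp_of_le hY hYN g).bdd_mul (measurable_from_top.comp hB).aestronglyMeasurable
    (c := 1) (.of_forall fun ω => by simpa using hB1 ω)

theorem integral_natCast_of_le_one {B : Ω → ℕ} (hB : Measurable B) (hB1 : ∀ ω, B ω ≤ 1) {p : ℝ}
    (hp0 : 0 ≤ p) (hp : μ {ω | B ω = 1} = ENNReal.ofReal p) : ∫ ω, (B ω : ℝ) ∂μ = p := by
  have hindicator : (fun ω => (B ω : ℝ)) = (B ⁻¹' {1}).indicator 1 := by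
    funext ω
    rcases Nat.le_one_iff_eq_zero_or_eq_one.mp (hB1 ω) with h | h <;> simp [h]
  rw [hindicator, integral_indicator_one (hB (measurableSet_singleton 1)), measureReal_def]
  exact (congrArg ENNReal.toReal hp).trans (ENNReal.toReal_ofReal hp0)

theorem ProbabilityTheory.IndepFun.integral_stein_bernoulli_summand [IsFiniteMeasure μ]
    {B V : Ω → ℕ} (hind : IndepFun B V μ) (hB : Measurable B) (hV : Measurable V)
    (hB1 : ∀ ω, B ω ≤ 1) {N : ℕ} (hVN : ∀ ω, V ω ≤ N) {p : ℝ} (hmean : ∫ ω, (B ω : ℝ) ∂μ = p)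
    (g : ℕ → ℝ) :
    ∫ ω, (p * g (B ω + V ω) - B ω * g (B ω + V ω - 1)) ∂μ =
      p * ∫ ω, B ω * Δ_[1] g (B ω + V ω - 1) ∂μ := by
  have hWN : ∀ ω, B ω + V ω ≤ 1 + N := fun ω => add_le_add (hB1 ω) (hVN ω)
  have hgW : Integrable (fun ω => g (B ω + V ω)) μ := integrable_comp_of_le (hB.add hV) hWN g
  have hgV : Integrable (fun ω => g (V ω)) μ := integrable_comp_of_le hV hVN g
  have hBgV : ∫ ω, (B ω : ℝ) * g (V ω) ∂μ = p * ∫ ω, g (V ω) ∂μ := by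
    rw [← hmean]
    exact hind.integral_comp_mul_comp hB.aemeasurable hV.aemeasurable
      measurable_from_top.aestronglyMeasurable measurable_from_top.aestronglyMeasurable
  calc ∫ ω, (p * g (B ω + V ω) - B ω * g (B ω + V ω - 1)) ∂μ
      = ∫ ω, (p * g (B ω + V ω) - B ω * g (V ω)) ∂μ := by
        congr 1; funext ω; rw [Nat.cast_mul_apply_add_sub_one_of_le_one (hB1 ω)]
    _ = p * ∫ ω, g (B ω + V ω) ∂μ - p * ∫ ω, g (V ω) ∂μ := by
        rw [integral_sub (hgW.const_mul p) (integrable_natCast_mul_comp_of_le hB hB1 hV hVN g),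
          integral_const_mul, hBgV]
    _ = p * ∫ ω, (g (B ω + V ω) - g (V ω)) ∂μ := by rw [integral_sub hgW hgV, mul_sub]
    _ = p * ∫ ω, B ω * Δ_[1] g (B ω + V ω - 1) ∂μ := by
        congr 2; funext ω; rw [Nat.apply_add_sub_apply_of_le_one (hB1 ω)]

theorem ProbabilityTheory.iIndepFun.integral_stein_bernoulli_sum [IsFiniteMeasure μ]
    {ι : Type*} [Fintype ι] {X : ι → Ω → ℕ} (hindep : iIndepFun X μ) (hX : ∀ i, Measurable (X i))
    (hX1 : ∀ i ω, X i ω ≤ 1) {p : ι → ℝ} (hmean : ∀ i, ∫ ω, (X i ω : ℝ) ∂μ = p i) {W : Ω → ℕ}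
    (hW : ∀ ω, W ω = ∑ i, X i ω) (g : ℕ → ℝ) :
    ∫ ω, ((∑ i, p i) * g (W ω) - W ω * g (W ω - 1)) ∂μ =
      ∑ i, p i * ∫ ω, X i ω * Δ_[1] g (W ω - 1) ∂μ := by
  classical
  have hsplit : ∀ i ω, W ω = X i ω + (∑ j ∈ univ.erase i, X j) ω := fun i ω => by
    rw [hW, Finset.sum_apply]; exact (add_sum_erase _ (fun j => X j ω) (mem_univ i)).symm
  have hWmeas : Measurable W := by
    rw [show W = fun ω => ∑ i, X i ω from funext hW]
    exact Finset.measurable_sum univ fun i _ => hX i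
  have hWN : ∀ ω, W ω ≤ Fintype.card ι := fun ω => by
    simpa [hW] using sum_le_card_nsmul univ (fun i => X i ω) 1 fun i _ => hX1 i ω
  have hterm : ∀ i, ∫ ω, (p i * g (W ω) - X i ω * g (W ω - 1)) ∂μ =
      p i * ∫ ω, X i ω * Δ_[1] g (W ω - 1) ∂μ := fun i => by
    have hVN : ∀ ω, (∑ j ∈ univ.erase i, X j) ω ≤ Fintype.card ι := fun ω =>
      le_add_self.trans (hsplit i ω ▸ hWN ω)
    simp only [hsplit i]
    exact (hindep.indepFun_finsetSum_of_notMem hX (notMem_erase i univ)).symm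
      |>.integral_stein_bernoulli_summand (hX i)
        (by simpa only [← Finset.sum_apply] using Finset.measurable_sum _ fun j _ => hX j)
        (hX1 i) hVN (hmean i) g
  rw [← sum_congr rfl fun i _ => hterm i, ← integral_finsetSum]
  · congr 1; funext ω
    rw [sum_sub_distrib, ← sum_mul, ← sum_mul, hW]
    push_cast; rfl
  · exact fun i _ => ((integrable_comp_of_le hWmeas hWN g).const_mul _).sub
      (integrable_natCast_mul_comp_of_le (hX i) (hX1 i) (hWmeas.sub_const 1)
        (fun ω => (Nat.sub_le _ _).trans (hWN ω)) g)

theorem abs_integral_mul_le_integral_mul {Z F : Ω → ℝ} (hZ : Integrable Z μ) (hZ0 : ∀ ω, 0 ≤ Z ω)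
    {C : ℝ} (hF : ∀ ω, |F ω| ≤ C) : |∫ ω, Z ω * F ω ∂μ| ≤ (∫ ω, Z ω ∂μ) * C := by
  rw [← integral_mul_const]
  refine norm_integral_le_of_norm_le (f := fun ω => Z ω * F ω) (hZ.mul_const C)
    (.of_forall fun ω => ?_)
  rw [Real.norm_eq_abs, abs_mul, abs_of_nonneg (hZ0 ω)]
  exact mul_le_mul_of_nonneg_left (hF ω) (hZ0 ω)

end

theorem poisson_generator_identity_general
    {Ω : Type*} [MeasurableSpace Ω] (μ : Measure Ω) [IsProbabilityMeasure μ]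
    (n : ℕ) (X : Fin n → Ω → ℕ) (p : Fin n → ℝ)
    (hmeas : ∀ i, Measurable (X i))
    (hindep : iIndepFun X μ)
    (h01 : ∀ i ω, X i ω ≤ 1)
    (hp : ∀ i, μ {ω | X i ω = 1} = ENNReal.ofReal (p i))
    (hp0 : ∀ i, 0 ≤ p i)
    (l : ℝ) (hl : l = ∑ i, p i)
    (W : Ω → ℕ) (hW : W = fun ω => ∑ i, X i ω)
    (f : ℕ → ℝ) (C : ℝ)
    (hC : ∀ j : ℕ, |f (j + 2) - 2 * f (j + 1) + f j| ≤ C) :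
    (∫ ω, (l * (f (W ω + 1) - f (W ω)) - (W ω : ℝ) * (f (W ω) - f (W ω - 1))) ∂μ =
        ∑ i, p i * ∫ ω, (X i ω : ℝ) *
          (f (W ω - 1 + 2) - 2 * f (W ω - 1 + 1) + f (W ω - 1)) ∂μ) ∧
      |∫ ω, (l * (f (W ω + 1) - f (W ω)) - (W ω : ℝ) * (f (W ω) - f (W ω - 1))) ∂μ| ≤
        (∑ i, p i ^ 2) * C := by
  subst hl
  have hmean i := integral_natCast_of_le_one (hmeas i) (h01 i) (hp0 i) (hp i)
  have hΔ2 : ∀ j, Δ_[1] (Δ_[1] f) j = f (j + 2) - 2 * f (j + 1) + f j := fun j => by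
    simp only [fwdDiff]; ring_nf
  -- `W ω - 1` truncates at `0`, where both sides vanish anyway
  have hdeath : ∀ ω, (W ω : ℝ) * (f (W ω) - f (W ω - 1)) = W ω * Δ_[1] f (W ω - 1) := fun ω => by
    rcases Nat.eq_zero_or_pos (W ω) with h | h
    · simp [h]
    · rw [fwdDiff, Nat.sub_add_cancel h]
  have hidentity := hindep.integral_stein_bernoulli_sum hmeas h01 hmean (congrFun hW) (Δ_[1] f)
  simp only [hΔ2] at hidentity
  simp only [hdeath]
  refine ⟨hidentity, hidentity ▸ ?_⟩
  calc |∑ i, p i * ∫ ω, (X i ω : ℝ) *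
          (f (W ω - 1 + 2) - 2 * f (W ω - 1 + 1) + f (W ω - 1)) ∂μ|
      ≤ ∑ i, p i * (p i * C) := (abs_sum_le_sum_abs _ _).trans <| sum_le_sum fun i _ => by
        rw [abs_mul, abs_of_nonneg (hp0 i)]
        refine mul_le_mul_of_nonneg_left ?_ (hp0 i)
        rw [← hmean i]
        exact abs_integral_mul_le_integral_mul (integrable_comp_of_le (hmeas i) (h01 i) _)
          (fun _ => Nat.cast_nonneg _) fun _ => hC _
    _ = (∑ i, p i ^ 2) * C := by rw [sum_mul]; exact sum_congr rfl fun i _ => by ring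

theorem poisson_generator_identity
    {Ω : Type*} [MeasurableSpace Ω] (μ : Measure Ω) [IsProbabilityMeasure μ]
    (n : ℕ) (X : Fin n → Ω → ℕ) (p : Fin n → ℝ)
    (hmeas : ∀ i, Measurable (X i))
    (hindep : iIndepFun X μ)
    (h01 : ∀ i ω, X i ω ≤ 1)
    (hp : ∀ i, μ {ω | X i ω = 1} = ENNReal.ofReal (p i))
    (hp0 : ∀ i, 0 ≤ p i) (hp1 : ∀ i, p i ≤ 1)
    (l : ℝ) (hl : l = ∑ i, p i)
    (W : Ω → ℕ) (hW : W = fun ω => ∑ i, X i ω)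
    (f : ℕ → ℝ) (C : ℝ)
    (hC : ∀ j : ℕ, |f (j + 2) - 2 * f (j + 1) + f j| ≤ C) :
    (∫ ω, (l * (f (W ω + 1) - f (W ω)) - (W ω : ℝ) * (f (W ω) - f (W ω - 1))) ∂μ =
        ∑ i, p i * ∫ ω, (X i ω : ℝ) *
          (f (W ω - 1 + 2) - 2 * f (W ω - 1 + 1) + f (W ω - 1)) ∂μ) ∧
      |∫ ω, (l * (f (W ω + 1) - f (W ω)) - (W ω : ℝ) * (f (W ω) - f (W ω - 1))) ∂μ| ≤
        (∑ i, p i ^ 2) * C :=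
  poisson_generator_identity_general μ n X p hmeas hindep h01 hp hp0 l hl W hW f C hC
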